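/- Let M be a complex vector space, let D and X be linear endomorphisms of M, let v ∈ M, and let k, γ ∈ ℂ. Assume D v = 0 and that for every b ∈ ℕ: D(X^{b+1} v) + X(D(X^b v)) = 2(k + b + 1 + γ)·(X^b v). Using the Pochhammer symbol (x)_n := x(x+1)⋯(x+n−1) (with (x)_0 = 1), define d(a, b) ∈ ℂ for a, b ∈ ℕ by: d(2α, 2β) = 2^{2α}(−β)_α(−β − k − γ)_α; d(2α+1, 2β) = −2^{2α+1}(−β)_{α+1}(−β − k − γ)_α; d(2α+1, 2β+1) = −2^{2α+1}(−β)_α(−β − k − 1 − γ)_{α+1}; d(2α, 2β+1) = 2^{2α}(−β)_α(−β − k − 1 − γ)_α. Then for all a, b ∈ ℕ with a ≤ b one has D^a(X^b v) = d(a, b)·X^{b−a} v, and for all a > b one has D^a(X^b v) = 0. -/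
import Mathlib


/-- The Pochhammer symbol `(x)_n = x(x+1)⋯(x+n−1)`, with `(x)_0 = 1`. -/
def poch (x : ℂ) : ℕ → ℂ
  | 0 => 1
  | n + 1 => poch x n * (x + n)

/-- The constants `d^k_{a,b}` of the proof of Proposition 5.5 of the paper:
`d(2α, 2β) = 2^{2α}(−β)_α(−β−k−γ)_α`,
`d(2α+1, 2β) = −2^{2α+1}(−β)_{α+1}(−β−k−γ)_α`,
`d(2α+1, 2β+1) = −2^{2α+1}(−β)_α(−β−k−1−γ)_{α+1}`,
`d(2α, 2β+1) = 2^{2α}(−β)_α(−β−k−1−γ)_α`. -/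
def dconst (k γ : ℂ) (a b : ℕ) : ℂ :=
  let α := a / 2
  let β : ℂ := (b / 2 : ℕ)
  if a % 2 = 0 then
    if b % 2 = 0 then (2 : ℂ) ^ a * poch (-β) α * poch (-β - k - γ) α
    else (2 : ℂ) ^ a * poch (-β) α * poch (-β - k - 1 - γ) α
  else
    if b % 2 = 0 then -((2 : ℂ) ^ a) * poch (-β) (α + 1) * poch (-β - k - γ) α
    else -((2 : ℂ) ^ a) * poch (-β) α * poch (-β - k - 1 - γ) (α + 1)

lemma poch_succ_front (x : ℂ) (n : ℕ) : poch x (n + 1) = x * poch (x + 1) n := by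
  induction n with
  | zero => simp [poch]
  | succ n ih =>
    show poch x (n + 1) * (x + (n + 1 : ℕ)) = x * (poch (x+1) n * (x + 1 + n))
    rw [ih]; push_cast; ring

lemma d_ee (k γ : ℂ) (α β : ℕ) : dconst k γ (2*α) (2*β) =
    (2:ℂ)^(2*α) * poch (-(β:ℂ)) α * poch (-(β:ℂ) - k - γ) α := by
  simp [dconst, Nat.mul_mod_right, Nat.mul_div_cancel_left]

lemma d_oe (k γ : ℂ) (α β : ℕ) : dconst k γ (2*α+1) (2*β) =
    -((2:ℂ)^(2*α+1)) * poch (-(β:ℂ)) (α+1) * poch (-(β:ℂ) - k - γ) α := by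
  have h1 : (2*α+1) % 2 = 1 := by omega
  have h2 : (2*α+1) / 2 = α := by omega
  simp [dconst, h1, h2, Nat.mul_mod_right, Nat.mul_div_cancel_left]

lemma d_eo (k γ : ℂ) (α β : ℕ) : dconst k γ (2*α) (2*β+1) =
    (2:ℂ)^(2*α) * poch (-(β:ℂ)) α * poch (-(β:ℂ) - k - 1 - γ) α := by
  have h1 : (2*β+1) % 2 = 1 := by omega
  have h2 : (2*β+1) / 2 = β := by omega
  simp [dconst, h1, h2, Nat.mul_mod_right, Nat.mul_div_cancel_left]

lemma d_oo (k γ : ℂ) (α β : ℕ) : dconst k γ (2*α+1) (2*β+1) =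
    -((2:ℂ)^(2*α+1)) * poch (-(β:ℂ)) α * poch (-(β:ℂ) - k - 1 - γ) (α+1) := by
  have h1 : (2*α+1) % 2 = 1 := by omega
  have h2 : (2*α+1) / 2 = α := by omega
  have h3 : (2*β+1) % 2 = 1 := by omega
  have h4 : (2*β+1) / 2 = β := by omega
  simp [dconst, h1, h2, h3, h4]

lemma dconst_zero (k γ : ℂ) (b : ℕ) : dconst k γ 0 b = 1 := by
  simp [dconst, poch]

/-- Recursion in `b` for the `a = 1` constants. -/
lemma idA (k γ : ℂ) (b : ℕ) :
    dconst k γ 1 (b+1) = 2*(k + (b:ℂ) + 1 + γ) - dconst k γ 1 b := by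
  rcases Nat.even_or_odd b with ⟨β, hβ⟩ | ⟨β, hβ⟩
  · have hb : b = 2*β := by omega
    subst hb
    have h1 : dconst k γ 1 (2*β+1) = -((2:ℂ)^(2*0+1)) * poch (-(β:ℂ)) 0 *
        poch (-(β:ℂ) - k - 1 - γ) (0+1) := d_oo k γ 0 β
    have h2 : dconst k γ 1 (2*β) = -((2:ℂ)^(2*0+1)) * poch (-(β:ℂ)) (0+1) *
        poch (-(β:ℂ) - k - γ) 0 := d_oe k γ 0 β
    rw [h1, h2]
    simp [poch]
    ring
  · have hb : b = 2*β+1 := by omega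
    subst hb
    have h1 : dconst k γ 1 (2*(β+1)) = -((2:ℂ)^(2*0+1)) * poch (-((β+1:ℕ):ℂ)) (0+1) *
        poch (-((β+1:ℕ):ℂ) - k - γ) 0 := d_oe k γ 0 (β+1)
    have he : 2*β+1+1 = 2*(β+1) := by ring
    rw [he, h1]
    have h2 : dconst k γ 1 (2*β+1) = -((2:ℂ)^(2*0+1)) * poch (-(β:ℂ)) 0 *
        poch (-(β:ℂ) - k - 1 - γ) (0+1) := d_oo k γ 0 β
    rw [h2]
    simp [poch]
    ring

/-- Multiplicative recursion in `a`. -/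
lemma idB (k γ : ℂ) (a b : ℕ) :
    dconst k γ (a+1) (b+1) = dconst k γ 1 (b+1) * dconst k γ a b := by
  rcases Nat.even_or_odd a with ⟨α, hα⟩ | ⟨α, hα⟩ <;>
    rcases Nat.even_or_odd b with ⟨β, hβ⟩ | ⟨β, hβ⟩
  · -- a = 2α, b = 2β
    have ha : a = 2*α := by omega
    have hb : b = 2*β := by omega
    subst ha; subst hb
    have h1 : dconst k γ (2*α+1) (2*β+1) = -((2:ℂ)^(2*α+1)) * poch (-(β:ℂ)) α *
        poch (-(β:ℂ) - k - 1 - γ) (α+1) := d_oo k γ α β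
    have h2 : dconst k γ 1 (2*β+1) = -((2:ℂ)^(2*0+1)) * poch (-(β:ℂ)) 0 *
        poch (-(β:ℂ) - k - 1 - γ) (0+1) := d_oo k γ 0 β
    rw [h1, h2, d_ee, poch_succ_front,
      show (-(β:ℂ) - k - 1 - γ + 1) = -(β:ℂ) - k - γ by ring]
    simp [poch]
    ring
  · -- a = 2α, b = 2β+1
    have ha : a = 2*α := by omega
    have hb : b = 2*β+1 := by omega
    subst ha; subst hb
    have he : 2*β+1+1 = 2*(β+1) := by ring
    have h1 : dconst k γ (2*α+1) (2*(β+1)) = -((2:ℂ)^(2*α+1)) * poch (-((β+1:ℕ):ℂ)) (α+1) *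
        poch (-((β+1:ℕ):ℂ) - k - γ) α := d_oe k γ α (β+1)
    have h2 : dconst k γ 1 (2*(β+1)) = -((2:ℂ)^(2*0+1)) * poch (-((β+1:ℕ):ℂ)) (0+1) *
        poch (-((β+1:ℕ):ℂ) - k - γ) 0 := d_oe k γ 0 (β+1)
    rw [he, h1, h2, d_eo, poch_succ_front,
      show (-((β+1:ℕ):ℂ) + 1) = -(β:ℂ) by push_cast; ring,
      show (-((β+1:ℕ):ℂ) - k - γ) = -(β:ℂ) - k - 1 - γ by push_cast; ring]
    simp [poch]
    ring
  · -- a = 2α+1, b = 2β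
    have ha : a = 2*α+1 := by omega
    have hb : b = 2*β := by omega
    subst ha; subst hb
    have he : 2*α+1+1 = 2*(α+1) := by ring
    have h1 : dconst k γ (2*(α+1)) (2*β+1) = (2:ℂ)^(2*(α+1)) * poch (-(β:ℂ)) (α+1) *
        poch (-(β:ℂ) - k - 1 - γ) (α+1) := d_eo k γ (α+1) β
    have h2 : dconst k γ 1 (2*β+1) = -((2:ℂ)^(2*0+1)) * poch (-(β:ℂ)) 0 *
        poch (-(β:ℂ) - k - 1 - γ) (0+1) := d_oo k γ 0 β
    rw [he, h1, h2, d_oe,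
      show poch (-(β:ℂ) - k - 1 - γ) (α+1) = (-(β:ℂ) - k - 1 - γ) *
        poch (-(β:ℂ) - k - γ) α by
          rw [poch_succ_front, show (-(β:ℂ) - k - 1 - γ + 1) = -(β:ℂ) - k - γ by ring]]
    simp [poch]
    ring
  · -- a = 2α+1, b = 2β+1
    have ha : a = 2*α+1 := by omega
    have hb : b = 2*β+1 := by omega
    subst ha; subst hb
    have he1 : 2*α+1+1 = 2*(α+1) := by ring
    have he2 : 2*β+1+1 = 2*(β+1) := by ring
    have h1 : dconst k γ (2*(α+1)) (2*(β+1)) = (2:ℂ)^(2*(α+1)) * poch (-((β+1:ℕ):ℂ)) (α+1) *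
        poch (-((β+1:ℕ):ℂ) - k - γ) (α+1) := d_ee k γ (α+1) (β+1)
    have h2 : dconst k γ 1 (2*(β+1)) = -((2:ℂ)^(2*0+1)) * poch (-((β+1:ℕ):ℂ)) (0+1) *
        poch (-((β+1:ℕ):ℂ) - k - γ) 0 := d_oe k γ 0 (β+1)
    rw [he1, he2, h1, h2, d_oo,
      show poch (-((β+1:ℕ):ℂ)) (α+1) = (-((β+1:ℕ):ℂ)) * poch (-(β:ℂ)) α by
        rw [poch_succ_front, show (-((β+1:ℕ):ℂ) + 1) = -(β:ℂ) by push_cast; ring],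
      show poch (-((β+1:ℕ):ℂ) - k - γ) (α+1) = poch (-(β:ℂ) - k - 1 - γ) (α+1) by
        rw [show (-((β+1:ℕ):ℂ) - k - γ) = -(β:ℂ) - k - 1 - γ by push_cast; ring]]
    simp [poch]
    ring

/-- The key computation in the proof of Proposition 5.5 of the paper: if `D v = 0`
and `D(X^{b+1} v) + X(D(X^b v)) = 2(k + b + 1 + γ)·X^b v` for all `b`, then
`D^a(X^b v) = d^k_{a,b}·X^{b−a} v` for `a ≤ b` and `D^a(X^b v) = 0` for `a > b`. -/
theorem iterated_action
    {M : Type*} [AddCommGroup M] [Module ℂ M]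
    (D X : Module.End ℂ M) (v : M) (k γ : ℂ)
    (hv : D v = 0)
    (hrel : ∀ b : ℕ, D ((X ^ (b + 1)) v) + X (D ((X ^ b) v))
      = (2 * (k + (b : ℂ) + 1 + γ)) • ((X ^ b) v)) :
    ∀ a b : ℕ,
      (a ≤ b → (D ^ a) ((X ^ b) v) = dconst k γ a b • ((X ^ (b - a)) v)) ∧
      (b < a → (D ^ a) ((X ^ b) v) = 0) := by
  -- First the `a = 1` case, for all `b`.
  have step1 : ∀ b : ℕ, D ((X ^ b) v) = dconst k γ 1 b • ((X ^ (b - 1)) v) := by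
    intro b
    induction b with
    | zero =>
      simp [hv]
      simp [dconst, poch]
    | succ c ih =>
      have h := hrel c
      rw [ih] at h
      have hX : X ((dconst k γ 1 c) • ((X ^ (c - 1)) v))
          = dconst k γ 1 c • X ((X ^ (c - 1)) v) := map_smul X _ _
      rw [hX] at h
      have hxx : dconst k γ 1 c • X ((X ^ (c - 1)) v) = dconst k γ 1 c • ((X ^ c) v) := by
        cases c with
        | zero => simp [dconst, poch]
        | succ c' =>
          congr 1
          rw [Nat.succ_sub_one, pow_succ', Module.End.mul_apply]
      rw [hxx] at h
      have : D ((X ^ (c+1)) v) = (2 * (k + (c:ℂ) + 1 + γ)) • ((X ^ c) v)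
          - dconst k γ 1 c • ((X ^ c) v) := by
        rw [← h]; abel
      rw [this, ← sub_smul, ← idA]
      simp
  intro a
  induction a with
  | zero =>
    intro b
    refine ⟨fun _ => ?_, fun h => absurd h (by omega)⟩
    simp [dconst_zero]
  | succ a ih =>
    intro b
    cases b with
    | zero =>
      refine ⟨fun h => absurd h (by omega), fun _ => ?_⟩
      rw [pow_succ, Module.End.mul_apply]
      simp [hv]
    | succ c =>
      have hD : (D ^ (a+1)) ((X ^ (c+1)) v) = dconst k γ 1 (c+1) • (D ^ a) ((X ^ c) v) := by
        rw [pow_succ, Module.End.mul_apply, step1 (c+1), Nat.succ_sub_one, map_smul]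
      constructor
      · intro h
        have hac : a ≤ c := by omega
        rw [hD, (ih c).1 hac, smul_smul, ← idB, Nat.succ_sub_succ]
      · intro h
        rw [hD, (ih c).2 (by omega), smul_zero]
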